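/- Multi-terminal leftover hash bound: let (A₁,…,A_T, E) have joint pmf P on finite alphabets, and for each t let f_{X_t} : A_t → {1,…,N_t} be independent ε-almost universal₂ random hashes; set M_t = f_{X_t}(A_t). Then for any s ∈ [0,1], E_{X₁,…,X_T}[exp(s · C_{1+s}(M₁,…,M_T | E))] ≤ ε^{sT} + Σ_{∅ ≠ S ⊆ {1,…,T}} ε^{s(T−|S|)} (∏_{t∈S} N_t^s) exp(−s H_{1+s}(A_S | E)). -/

import Mathlib

open Finset

/-- Conditional Shannon entropy `H(M|E)` of a joint pmf on `M × E`. -/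
noncomputable def condShannon {M E : Type*} [Fintype M] [Fintype E] (p : M × E → ℝ) : ℝ :=
  -∑ e, ∑ m, p (m, e) * Real.log (p (m, e) / ∑ m', p (m', e))

/-- Conditional Rényi entropy `H_{1+s}(M|E)` of a joint pmf on `M × E`
(Shannon entropy for `s = 0`). -/
noncomputable def condRenyi {M E : Type*} [Fintype M] [Fintype E] (s : ℝ)
    (p : M × E → ℝ) : ℝ :=
  if s = 0 then condShannon p
  else -(1 / s) * Real.log (∑ e, (∑ m', p (m', e)) *
    ∑ m, (p (m, e) / ∑ m', p (m', e)) ^ (1 + s))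

/- ------------ auxiliary lemmas --------------- -/

lemma sum_pi_prod' {ι : Type*} [Fintype ι] [DecidableEq ι] {X : ι → Type*}
    [∀ i, Fintype (X i)] (g : ∀ i, X i → ℝ) :
    ∑ x : ∀ i, X i, ∏ i, g i (x i) = ∏ i, ∑ y, g i y := by
  rw [Finset.prod_univ_sum, Fintype.piFinset_univ]

lemma real_rpow_add_le {x y p : ℝ} (hx : 0 ≤ x) (hy : 0 ≤ y) (hp : 0 ≤ p) (hp1 : p ≤ 1) :
    (x + y) ^ p ≤ x ^ p + y ^ p := by
  have h := NNReal.rpow_add_le_add_rpow x.toNNReal y.toNNReal hp hp1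
  calc (x+y)^p = ((x.toNNReal + y.toNNReal : NNReal):ℝ)^p := by
        rw [NNReal.coe_add, Real.coe_toNNReal _ hx, Real.coe_toNNReal _ hy]
    _ = (((x.toNNReal + y.toNNReal)^p : NNReal) : ℝ) := (NNReal.coe_rpow _ _).symm
    _ ≤ ((x.toNNReal^p + y.toNNReal^p : NNReal):ℝ) := NNReal.coe_le_coe.2 h
    _ = x^p + y^p := by
        rw [NNReal.coe_add, NNReal.coe_rpow, NNReal.coe_rpow,
          Real.coe_toNNReal _ hx, Real.coe_toNNReal _ hy]

lemma rpow_sum_le_sum_rpow' {ι : Type*} (s : Finset ι) (u : ι → ℝ)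
    (hu : ∀ i ∈ s, 0 ≤ u i) {p : ℝ} (hp : 0 < p) (hp1 : p ≤ 1) :
    (∑ i ∈ s, u i) ^ p ≤ ∑ i ∈ s, u i ^ p := by
  classical
  induction s using Finset.cons_induction with
  | empty => simp [Real.zero_rpow hp.ne']
  | cons a s ha ih =>
    rw [Finset.sum_cons, Finset.sum_cons]
    calc (u a + ∑ i ∈ s, u i) ^ p ≤ u a ^ p + (∑ i ∈ s, u i) ^ p :=
          real_rpow_add_le (hu a (mem_cons_self a s))
            (Finset.sum_nonneg fun i hi => hu i (mem_cons_of_mem hi)) hp.le hp1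
      _ ≤ u a ^ p + ∑ i ∈ s, u i ^ p := by
          gcongr
          exact ih fun i hi => hu i (mem_cons_of_mem hi)

lemma jensen_rpow' {ι : Type*} (sF : Finset ι) (w g : ι → ℝ) (hw : ∀ i ∈ sF, 0 ≤ w i)
    (hw1 : ∑ i ∈ sF, w i = 1) (hg : ∀ i ∈ sF, 0 ≤ g i) {p : ℝ} (hp : 0 < p) (hp1 : p ≤ 1) :
    ∑ i ∈ sF, w i * g i ^ p ≤ (∑ i ∈ sF, w i * g i) ^ p := by
  have hq : (1:ℝ) ≤ 1 / p := by
    rw [le_div_iff₀ hp]; simpa using hp1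
  have h := Real.arith_mean_le_rpow_mean sF w (fun i => g i ^ p) hw hw1
    (fun i hi => Real.rpow_nonneg (hg i hi) p) hq
  have heq : ∀ i ∈ sF, w i * (g i ^ p) ^ (1 / p) = w i * g i := by
    intro i hi
    rw [← Real.rpow_mul (hg i hi), mul_one_div_cancel hp.ne', Real.rpow_one]
  rw [Finset.sum_congr rfl heq, one_div_one_div] at h
  exact h

lemma renyi_term_eq {ι : Type*} [Fintype ι] (q : ι → ℝ) (hq : ∀ i, 0 ≤ q i)
    {s : ℝ} (hs : 0 < s) :
    (∑ i, q i) * ∑ i, (q i / ∑ j, q j) ^ (1 + s)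
      = (∑ i, q i) ^ (-s) * ∑ i, q i ^ (1 + s) := by
  have h1s : (0:ℝ) < 1 + s := by linarith
  rcases eq_or_lt_of_le (Finset.sum_nonneg fun i (_ : i ∈ univ) => hq i) with hc | hc
  · have hz : ∀ i, q i = 0 := by
      intro i
      have := (Finset.sum_eq_zero_iff_of_nonneg (fun i _ => hq i)).1 hc.symm
      exact this i (mem_univ i)
    simp [hz, Real.zero_rpow h1s.ne']
  · have hcne : (∑ j, q j) ≠ 0 := hc.ne'
    rw [Finset.sum_congr rfl fun i _ =>
      Real.div_rpow (hq i) (Finset.sum_nonneg fun j _ => hq j) (1+s)]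
    rw [← Finset.sum_div]
    have hsplit : (∑ j, q j) ^ (1+s) = (∑ j, q j) * (∑ j, q j) ^ s := by
      rw [Real.rpow_add hc, Real.rpow_one]
    rw [hsplit, Real.rpow_neg hc.le]
    have hspos : (0:ℝ) < (∑ j, q j) ^ s := Real.rpow_pos_of_pos hc s
    field_simp

lemma sum_ite_forall_eq {ι : Type*} [Fintype ι] [DecidableEq ι] {β : ι → Type*} [∀ i, Fintype (β i)]
    [∀ i, DecidableEq (β i)] (g : ∀ i, β i) (h : (∀ i, β i) → ℝ)
    (D : ∀ m : ∀ i, β i, Decidable (∀ i, g i = m i)) :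
    ∑ m : ∀ i, β i, (@ite ℝ (∀ i, g i = m i) (D m) (h m) 0) = h g := by
  simp only [← funext_iff]
  simp [Finset.sum_ite_eq]

lemma renyi_raw_pos {M E : Type*} [Fintype M] [Fintype E] (q : M × E → ℝ)
    (hq : ∀ me, 0 ≤ q me) (h1 : 0 < ∑ e, ∑ m, q (m, e)) {s : ℝ} (hs : 0 < s) :
    0 < ∑ e, (∑ m', q (m', e)) * ∑ m, (q (m, e) / ∑ m', q (m', e)) ^ (1 + s) := by
  obtain ⟨e, -, he⟩ := Finset.exists_lt_of_sum_lt
    (f := fun _ : E => (0:ℝ)) (g := fun e => ∑ m, q (m, e)) (by simpa using h1)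
  obtain ⟨m, -, hm⟩ := Finset.exists_lt_of_sum_lt
    (f := fun _ : M => (0:ℝ)) (g := fun m => q (m, e)) (by simpa using he)
  refine Finset.sum_pos' (fun i _ => mul_nonneg (Finset.sum_nonneg fun _ _ => hq _)
    (Finset.sum_nonneg fun _ _ => Real.rpow_nonneg
      (div_nonneg (hq _) (Finset.sum_nonneg fun _ _ => hq _)) _)) ⟨e, mem_univ e, ?_⟩
  refine mul_pos he (Finset.sum_pos' (fun i _ => Real.rpow_nonneg
    (div_nonneg (hq _) (Finset.sum_nonneg fun _ _ => hq _)) _)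
    ⟨m, mem_univ m, Real.rpow_pos_of_pos (div_pos hm he) _⟩)

lemma condRenyi_exp {M E : Type*} [Fintype M] [Fintype E] (q : M × E → ℝ)
    {s : ℝ} (hs : s ≠ 0)
    (hpos : 0 < ∑ e, (∑ m', q (m', e)) * ∑ m, (q (m, e) / ∑ m', q (m', e)) ^ (1 + s)) :
    Real.exp (-s * condRenyi s q)
      = ∑ e, (∑ m', q (m', e)) * ∑ m, (q (m, e) / ∑ m', q (m', e)) ^ (1 + s) := by
  rw [condRenyi, if_neg hs]
  have h : -s * (-(1/s) * Real.log (∑ e, (∑ m', q (m', e)) *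
      ∑ m, (q (m, e) / ∑ m', q (m', e)) ^ (1 + s)))
      = Real.log (∑ e, (∑ m', q (m', e)) * ∑ m, (q (m, e) / ∑ m', q (m', e)) ^ (1 + s)) := by
    field_simp
  rw [h, Real.exp_log hpos]

lemma sum_ite_mul' {ι : Type*} (sF : Finset ι) (c : ι → Prop) [DecidablePred c]
    (v : ι → ℝ) (C : ℝ) :
    (∑ a ∈ sF, if c a then v a else 0) * C = ∑ a ∈ sF, if c a then v a * C else 0 := by
  rw [Finset.sum_mul]
  exact Finset.sum_congr rfl fun a _ => by rw [ite_mul, zero_mul]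

section Defs
variable {T : ℕ} {A : Fin T → Type*} [∀ t, Fintype (A t)] [∀ t, DecidableEq (A t)]
  {E : Type*} [Fintype E] {X : Fin T → Type*} [∀ t, Fintype (X t)] {N : Fin T → ℕ}

/-- pmf of hashed values. -/
noncomputable def pfun (f : ∀ t, X t → A t → Fin (N t)) (P : (∀ t, A t) × E → ℝ)
    (x : ∀ t, X t) (m : ∀ t, Fin (N t)) (e : E) : ℝ :=
  ∑ a : ∀ t, A t, if (∀ t, f t (x t) (a t) = m t) then P (a, e) else 0

/-- marginal pmf on a subset of coordinates. -/
noncomputable def QSfun (P : (∀ t, A t) × E → ℝ) (S : Finset (Fin T))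
    (α : ∀ t : {t // t ∈ S}, A t.1) (e : E) : ℝ :=
  ∑ a : ∀ t, A t, if (∀ t : {t // t ∈ S}, a t.1 = α t) then P (a, e) else 0

noncomputable def Wfun (μ : ∀ t, X t → ℝ) (x : ∀ t, X t) : ℝ := ∏ t, μ t (x t)

noncomputable def Qfun (P : (∀ t, A t) × E → ℝ) (e : E) : ℝ := ∑ a : ∀ t, A t, P (a, e)

noncomputable def Zfun (f : ∀ t, X t → A t → Fin (N t)) (P : (∀ t, A t) × E → ℝ)
    (s : ℝ) (x : ∀ t, X t) : ℝ :=
  ∑ e, (Qfun P e) ^ (-s) * ∑ a : ∀ t, A t,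
    P (a, e) * pfun f P x (fun t => f t (x t) (a t)) e ^ s

noncomputable def Gfun (μ : ∀ t, X t → ℝ) (f : ∀ t, X t → A t → Fin (N t))
    (P : (∀ t, A t) × E → ℝ) (a : ∀ t, A t) (e : E) : ℝ :=
  ∑ x : ∀ t, X t, Wfun μ x * pfun f P x (fun t => f t (x t) (a t)) e

noncomputable def WSfun (P : (∀ t, A t) × E → ℝ) (s : ℝ) (S : Finset (Fin T)) : ℝ :=
  ∑ e, (Qfun P e) ^ (-s) * ∑ α : ∀ t : {t // t ∈ S}, A t.1, QSfun P S α e ^ (1 + s)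

end Defs

/-- Multi-terminal leftover hash bound:
`E_{X_{1:T}}[exp(s·C_{1+s}(M_{1:T}|E))]
  ≤ ε^{sT} + Σ_{∅≠S⊆[T]} ε^{s(T−|S|)} (∏_{t∈S} N_t^s) exp(−s H_{1+s}(A_S|E))`. -/
theorem leftover_hash_multi {T : ℕ} {A : Fin T → Type*}
    [∀ t, Fintype (A t)] [∀ t, DecidableEq (A t)]
    {E : Type*} [Fintype E]
    {X : Fin T → Type*} [∀ t, Fintype (X t)]
    (N : Fin T → ℕ) (hN : ∀ t, 0 < N t) (ε : ℝ) (hε : 0 < ε)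
    (P : (∀ t, A t) × E → ℝ) (hP0 : ∀ p, 0 ≤ P p) (hP1 : ∑ p, P p = 1)
    (μ : ∀ t, X t → ℝ) (hμ0 : ∀ t x, 0 ≤ μ t x) (hμ1 : ∀ t, ∑ x, μ t x = 1)
    (f : ∀ t, X t → A t → Fin (N t))
    (hAU : ∀ t, ∀ a₁ a₂ : A t, a₁ ≠ a₂ →
      ∑ x, μ t x * (if f t x a₁ = f t x a₂ then 1 else 0) ≤ ε / N t)
    (s : ℝ) (hs0 : 0 ≤ s) (hs1 : s ≤ 1) :
    ∑ x : ∀ t, X t, (∏ t, μ t (x t)) *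
        Real.exp (s * ((∑ t, Real.log (N t)) -
          condRenyi s (fun me : (∀ t, Fin (N t)) × E =>
            ∑ a : ∀ t, A t,
              if (∀ t, f t (x t) (a t) = me.1 t) then P (a, me.2) else 0)))
      ≤ ε ^ (s * (T : ℝ)) +
        ∑ S ∈ univ.powerset.filter (fun S : Finset (Fin T) => S.Nonempty),
          ε ^ (s * ((T : ℝ) - (S.card : ℝ))) * (∏ t ∈ S, (N t : ℝ) ^ s) *
            Real.exp (-s * condRenyi s (fun ae : (∀ t : {t // t ∈ S}, A t.1) × E =>
              ∑ a : ∀ t, A t,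
                if (∀ t : {t // t ∈ S}, a t.1 = ae.1 t) then P (a, ae.2) else 0)) := by
  classical
  have hWsum : ∑ x : ∀ t, X t, ∏ t, μ t (x t) = 1 := by
    rw [sum_pi_prod']
    simp [hμ1]
  rcases eq_or_lt_of_le hs0 with hs | hs
  · -- s = 0 case
    subst hs
    simp only [zero_mul, Real.exp_zero, mul_one, Real.rpow_zero, hWsum, neg_zero,
      prod_const_one, one_mul]
    have h0 : (0:ℝ) ≤ ∑ S ∈ univ.powerset.filter (fun S : Finset (Fin T) => S.Nonempty),
        (1:ℝ) := Finset.sum_nonneg fun S _ => zero_le_one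
    linarith
  · -- main case
    have hsne : s ≠ 0 := hs.ne'
    have h1s : (0:ℝ) < 1 + s := by linarith
    have hQ0 : ∀ e, 0 ≤ Qfun P e := fun e => Finset.sum_nonneg fun a _ => hP0 _
    have hQ1 : ∑ e, Qfun P e = 1 := by
      rw [show (∑ e, Qfun P e) = ∑ a : ∀ t, A t, ∑ e, P (a, e) from Finset.sum_comm,
        ← Fintype.sum_prod_type]
      exact hP1
    have hW0 : ∀ x : ∀ t, X t, 0 ≤ Wfun μ x :=
      fun x => Finset.prod_nonneg fun t _ => hμ0 t (x t)
    have hWsum' : ∑ x : ∀ t, X t, Wfun μ x = 1 := hWsum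
    have hp0 : ∀ (x : ∀ t, X t) m e, 0 ≤ pfun f P x m e := by
      intro x m e
      refine Finset.sum_nonneg fun a _ => ?_
      split
      · exact hP0 _
      · exact le_rfl
    have hQS0 : ∀ (S : Finset (Fin T)) α e, 0 ≤ QSfun P S α e := by
      intro S α e
      refine Finset.sum_nonneg fun a _ => ?_
      split
      · exact hP0 _
      · exact le_rfl
    have hpsum : ∀ (x : ∀ t, X t) e, (∑ m : ∀ t, Fin (N t), pfun f P x m e) = Qfun P e := by
      intro x e
      rw [show (∑ m : ∀ t, Fin (N t), pfun f P x m e)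
          = ∑ a : ∀ t, A t, ∑ m : ∀ t, Fin (N t),
            (if (∀ t, f t (x t) (a t) = m t) then P (a, e) else 0) from Finset.sum_comm]
      exact Finset.sum_congr rfl fun a _ =>
        sum_ite_forall_eq (fun t => f t (x t) (a t)) (fun _ => P (a, e)) _
    have hQSsum : ∀ (S : Finset (Fin T)) e,
        (∑ α : ∀ t : {t // t ∈ S}, A t.1, QSfun P S α e) = Qfun P e := by
      intro S e
      rw [show (∑ α : ∀ t : {t // t ∈ S}, A t.1, QSfun P S α e)
          = ∑ a : ∀ t, A t, ∑ α : ∀ t : {t // t ∈ S}, A t.1,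
            (if (∀ t : {t // t ∈ S}, a t.1 = α t) then P (a, e) else 0) from Finset.sum_comm]
      exact Finset.sum_congr rfl fun a _ =>
        sum_ite_forall_eq (fun t : {t // t ∈ S} => a t.1) (fun _ => P (a, e)) _
    -- Step B inner : ∑_m p^{1+s} = ∑_a P(a,e) p(f̂ a)^s
    have hstep2 : ∀ (x : ∀ t, X t) e,
        (∑ m : ∀ t, Fin (N t), pfun f P x m e ^ (1+s))
          = ∑ a : ∀ t, A t, P (a, e) * pfun f P x (fun t => f t (x t) (a t)) e ^ s := by
      intro x e
      calc (∑ m : ∀ t, Fin (N t), pfun f P x m e ^ (1+s))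
          = ∑ m : ∀ t, Fin (N t), pfun f P x m e * pfun f P x m e ^ s :=
            Finset.sum_congr rfl fun m _ => by
              rw [Real.rpow_add' (hp0 x m e) (by positivity), Real.rpow_one]
        _ = ∑ m : ∀ t, Fin (N t), ∑ a : ∀ t, A t,
              (if (∀ t, f t (x t) (a t) = m t)
                then P (a, e) * pfun f P x m e ^ s else 0) :=
            Finset.sum_congr rfl fun m _ =>
              sum_ite_mul' univ _ (fun a => P (a, e)) (pfun f P x m e ^ s)
        _ = ∑ a : ∀ t, A t, ∑ m : ∀ t, Fin (N t),
              (if (∀ t, f t (x t) (a t) = m t)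
                then P (a, e) * pfun f P x m e ^ s else 0) := Finset.sum_comm
        _ = ∑ a : ∀ t, A t, P (a, e) * pfun f P x (fun t => f t (x t) (a t)) e ^ s :=
            Finset.sum_congr rfl fun a _ =>
              sum_ite_forall_eq (fun t => f t (x t) (a t))
                (fun m => P (a, e) * pfun f P x m e ^ s) _
    -- per-x identity
    have hexpL : Real.exp (s * ∑ t, Real.log (N t)) = ∏ t, (N t:ℝ) ^ s := by
      rw [Finset.mul_sum, Real.exp_sum]
      refine Finset.prod_congr rfl fun t _ => ?_
      rw [mul_comm, ← Real.rpow_def_of_pos (by exact_mod_cast hN t : (0:ℝ) < (N t:ℝ))]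
    have hxid : ∀ x : ∀ t, X t,
        Real.exp (s * ((∑ t, Real.log (N t)) -
          condRenyi s (fun me : (∀ t, Fin (N t)) × E =>
            ∑ a : ∀ t, A t,
              if (∀ t, f t (x t) (a t) = me.1 t) then P (a, me.2) else 0)))
        = (∏ t, (N t:ℝ) ^ s) * Zfun f P s x := by
      intro x
      have hpos : 0 < ∑ e, (∑ m' : ∀ t, Fin (N t), pfun f P x m' e) *
          ∑ m : ∀ t, Fin (N t),
            (pfun f P x m e / ∑ m' : ∀ t, Fin (N t), pfun f P x m' e) ^ (1+s) := by
        refine renyi_raw_pos (fun me => pfun f P x me.1 me.2)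
          (fun me => hp0 x me.1 me.2) ?_ hs
        have h1 : (∑ e, ∑ m : ∀ t, Fin (N t), pfun f P x m e) = 1 := by
          simp only [hpsum]; exact hQ1
        exact lt_of_lt_of_eq one_pos h1.symm
      have hexpq : Real.exp (-s * condRenyi s (fun me : (∀ t, Fin (N t)) × E =>
          ∑ a : ∀ t, A t,
            if (∀ t, f t (x t) (a t) = me.1 t) then P (a, me.2) else 0))
          = Zfun f P s x := by
        rw [condRenyi_exp (fun me : (∀ t, Fin (N t)) × E =>
          ∑ a : ∀ t, A t,
            if (∀ t, f t (x t) (a t) = me.1 t) then P (a, me.2) else 0) hsne hpos]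
        show (∑ e, (∑ m' : ∀ t, Fin (N t), pfun f P x m' e) *
          ∑ m : ∀ t, Fin (N t),
            (pfun f P x m e / ∑ m' : ∀ t, Fin (N t), pfun f P x m' e) ^ (1+s))
          = Zfun f P s x
        calc (∑ e, (∑ m' : ∀ t, Fin (N t), pfun f P x m' e) *
            ∑ m : ∀ t, Fin (N t),
              (pfun f P x m e / ∑ m' : ∀ t, Fin (N t), pfun f P x m' e) ^ (1+s))
            = ∑ e, (Qfun P e) ^ (-s) * ∑ m : ∀ t, Fin (N t), pfun f P x m e ^ (1+s) := by
              refine Finset.sum_congr rfl fun e _ => ?_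
              rw [← hpsum x e]
              exact renyi_term_eq (fun m => pfun f P x m e) (fun m => hp0 x m e) hs
          _ = Zfun f P s x :=
              Finset.sum_congr rfl fun e _ => by rw [hstep2 x e]
      have hsplit : s * ((∑ t, Real.log (N t)) -
          condRenyi s (fun me : (∀ t, Fin (N t)) × E =>
            ∑ a : ∀ t, A t,
              if (∀ t, f t (x t) (a t) = me.1 t) then P (a, me.2) else 0))
          = s * (∑ t, Real.log (N t)) +
            -s * condRenyi s (fun me : (∀ t, Fin (N t)) × E =>
              ∑ a : ∀ t, A t,
                if (∀ t, f t (x t) (a t) = me.1 t) then P (a, me.2) else 0) := by ring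
      rw [hsplit, Real.exp_add, hexpL, hexpq]
    -- Jensen step
    have hJen : ∀ (a : ∀ t, A t) e,
        (∑ x : ∀ t, X t, Wfun μ x * pfun f P x (fun t => f t (x t) (a t)) e ^ s)
          ≤ Gfun μ f P a e ^ s :=
      fun a e => jensen_rpow' univ (Wfun μ)
        (fun x => pfun f P x (fun t => f t (x t) (a t)) e)
        (fun x _ => hW0 x) hWsum' (fun x _ => hp0 x _ e) hs hs1
    have hG0 : ∀ (a : ∀ t, A t) e, 0 ≤ Gfun μ f P a e := fun a e =>
      Finset.sum_nonneg fun x _ => mul_nonneg (hW0 x) (hp0 x _ e)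
    -- rearrangement C1
    have hC1 : ∑ x : ∀ t, X t, Wfun μ x * Zfun f P s x
        = ∑ e, (Qfun P e) ^ (-s) * ∑ a : ∀ t, A t,
            P (a, e) * ∑ x : ∀ t, X t,
              Wfun μ x * pfun f P x (fun t => f t (x t) (a t)) e ^ s := by
      calc ∑ x : ∀ t, X t, Wfun μ x * Zfun f P s x
          = ∑ x : ∀ t, X t, ∑ e, ∑ a : ∀ t, A t, (Qfun P e) ^ (-s) *
              (P (a, e) * (Wfun μ x * pfun f P x (fun t => f t (x t) (a t)) e ^ s)) := by
            refine Finset.sum_congr rfl fun x _ => ?_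
            rw [show Wfun μ x * Zfun f P s x = ∑ e, Wfun μ x * ((Qfun P e) ^ (-s) *
              ∑ a : ∀ t, A t, P (a, e) * pfun f P x (fun t => f t (x t) (a t)) e ^ s)
              from Finset.mul_sum _ _ _]
            refine Finset.sum_congr rfl fun e _ => ?_
            rw [Finset.mul_sum, Finset.mul_sum]
            exact Finset.sum_congr rfl fun a _ => by ring
        _ = ∑ e, ∑ x : ∀ t, X t, ∑ a : ∀ t, A t, (Qfun P e) ^ (-s) *
              (P (a, e) * (Wfun μ x * pfun f P x (fun t => f t (x t) (a t)) e ^ s)) :=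
            Finset.sum_comm
        _ = ∑ e, ∑ a : ∀ t, A t, ∑ x : ∀ t, X t, (Qfun P e) ^ (-s) *
              (P (a, e) * (Wfun μ x * pfun f P x (fun t => f t (x t) (a t)) e ^ s)) :=
            Finset.sum_congr rfl fun e _ => Finset.sum_comm
        _ = ∑ e, (Qfun P e) ^ (-s) * ∑ a : ∀ t, A t,
              P (a, e) * ∑ x : ∀ t, X t,
                Wfun μ x * pfun f P x (fun t => f t (x t) (a t)) e ^ s := by
            refine Finset.sum_congr rfl fun e _ => ?_
            simp only [Finset.mul_sum]
    -- C2 : apply Jensen inside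
    have hC2 : (∑ e, (Qfun P e) ^ (-s) * ∑ a : ∀ t, A t,
            P (a, e) * ∑ x : ∀ t, X t,
              Wfun μ x * pfun f P x (fun t => f t (x t) (a t)) e ^ s)
        ≤ ∑ e, (Qfun P e) ^ (-s) * ∑ a : ∀ t, A t, P (a, e) * Gfun μ f P a e ^ s := by
      refine Finset.sum_le_sum fun e _ => ?_
      refine mul_le_mul_of_nonneg_left ?_ (Real.rpow_nonneg (hQ0 e) _)
      exact Finset.sum_le_sum fun a _ =>
        mul_le_mul_of_nonneg_left (hJen a e) (hP0 _)
    -- C3 : averaged collision probability factorizes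
    have hG : ∀ (a : ∀ t, A t) e, Gfun μ f P a e
        = ∑ a' : ∀ t, A t, P (a', e) * ∏ t, ∑ y : X t,
            μ t y * (if f t y (a' t) = f t y (a t) then 1 else 0) := by
      intro a e
      calc Gfun μ f P a e
          = ∑ x : ∀ t, X t, ∑ a' : ∀ t, A t, (∏ t, μ t (x t)) *
              (if (∀ t, f t (x t) (a' t) = f t (x t) (a t)) then P (a', e) else 0) := by
            refine Finset.sum_congr rfl fun x _ => ?_
            show (∏ t, μ t (x t)) * (∑ a' : ∀ t, A t,
              (if (∀ t, f t (x t) (a' t) = f t (x t) (a t)) then P (a', e) else 0)) = _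
            rw [Finset.mul_sum]
        _ = ∑ a' : ∀ t, A t, ∑ x : ∀ t, X t, (∏ t, μ t (x t)) *
              (if (∀ t, f t (x t) (a' t) = f t (x t) (a t)) then P (a', e) else 0) :=
            Finset.sum_comm
        _ = ∑ a' : ∀ t, A t, P (a', e) * ∏ t, ∑ y : X t,
              μ t y * (if f t y (a' t) = f t y (a t) then 1 else 0) := by
            refine Finset.sum_congr rfl fun a' _ => ?_
            have hpt : ∀ x : ∀ t, X t, (∏ t, μ t (x t)) *
                (if (∀ t, f t (x t) (a' t) = f t (x t) (a t)) then P (a', e) else 0)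
                = P (a', e) * ∏ t, (μ t (x t) *
                    (if f t (x t) (a' t) = f t (x t) (a t) then 1 else 0)) := by
              intro x
              rw [Finset.prod_mul_distrib, Finset.prod_boole]
              by_cases h : ∀ t, f t (x t) (a' t) = f t (x t) (a t)
              · rw [if_pos h, if_pos (fun t _ => h t)]; ring
              · rw [if_neg h, if_neg (fun hh => h fun t => hh t (mem_univ t))]; ring
            rw [Finset.sum_congr rfl fun x _ => hpt x, ← Finset.mul_sum,
              sum_pi_prod' (fun t y => μ t y *
                (if f t y (a' t) = f t y (a t) then 1 else 0))]
    -- C4 : expand the product bound over subsets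
    have hGle : ∀ (a : ∀ t, A t) e, Gfun μ f P a e
        ≤ ∑ S ∈ univ.powerset, (∏ t ∈ univ \ S, ε / (N t : ℝ)) *
            QSfun P S (fun t => a t.1) e := by
      intro a e
      rw [hG a e]
      have hkey : ∀ a' : ∀ t, A t, P (a', e) * ∏ t, ∑ y : X t,
          μ t y * (if f t y (a' t) = f t y (a t) then 1 else 0)
          ≤ ∑ S ∈ univ.powerset, (∏ t ∈ univ \ S, ε / (N t : ℝ)) *
              (if (∀ t : {t // t ∈ S}, a' t.1 = a t.1) then P (a', e) else 0) := by
        intro a'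
        have hc0 : ∀ t, (0:ℝ) ≤ ∑ y : X t,
            μ t y * (if f t y (a' t) = f t y (a t) then 1 else 0) := by
          intro t
          refine Finset.sum_nonneg fun y _ => mul_nonneg (hμ0 t y) ?_
          split
          · exact zero_le_one
          · exact le_rfl
        have hεN : ∀ t : Fin T, (0:ℝ) ≤ ε / (N t : ℝ) :=
          fun t => div_nonneg hε.le (Nat.cast_nonneg _)
        have hcd : ∀ t, (∑ y : X t, μ t y *
            (if f t y (a' t) = f t y (a t) then 1 else 0))
            ≤ (if a' t = a t then (1:ℝ) else 0) +
              (if a' t = a t then 0 else ε / (N t : ℝ)) := by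
          intro t
          by_cases h : a' t = a t
          · rw [if_pos h, if_pos h, h]
            simp [hμ1 t]
          · rw [if_neg h, if_neg h, zero_add]
            exact hAU t (a' t) (a t) h
        calc P (a', e) * ∏ t, ∑ y : X t,
              μ t y * (if f t y (a' t) = f t y (a t) then 1 else 0)
            ≤ P (a', e) * ∏ t, ((if a' t = a t then (1:ℝ) else 0) +
                (if a' t = a t then 0 else ε / (N t : ℝ))) :=
              mul_le_mul_of_nonneg_left
                (Finset.prod_le_prod (fun t _ => hc0 t) (fun t _ => hcd t)) (hP0 _)
          _ = ∑ S ∈ univ.powerset, P (a', e) *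
                ((∏ t ∈ S, if a' t = a t then (1:ℝ) else 0) *
                 ∏ t ∈ univ \ S, if a' t = a t then 0 else ε / (N t : ℝ)) := by
              rw [Finset.prod_add, Finset.mul_sum]
          _ ≤ ∑ S ∈ univ.powerset, (∏ t ∈ univ \ S, ε / (N t : ℝ)) *
                (if (∀ t : {t // t ∈ S}, a' t.1 = a t.1) then P (a', e) else 0) := by
              refine Finset.sum_le_sum fun S _ => ?_
              rw [Finset.prod_boole]
              by_cases h : ∀ t ∈ S, a' t = a t
              · rw [if_pos h, if_pos (fun t : {t // t ∈ S} => h t.1 t.2)]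
                have hle : (∏ t ∈ univ \ S, if a' t = a t then (0:ℝ) else ε / (N t : ℝ))
                    ≤ ∏ t ∈ univ \ S, ε / (N t : ℝ) := by
                  refine Finset.prod_le_prod (fun t _ => ?_) (fun t _ => ?_)
                  · split
                    · exact le_rfl
                    · exact hεN t
                  · split
                    · exact hεN t
                    · exact le_rfl
                calc P (a', e) * ((1:ℝ) *
                      ∏ t ∈ univ \ S, if a' t = a t then (0:ℝ) else ε / (N t : ℝ))
                    = (∏ t ∈ univ \ S, if a' t = a t then (0:ℝ) else ε / (N t : ℝ)) *
                        P (a', e) := by ring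
                  _ ≤ (∏ t ∈ univ \ S, ε / (N t : ℝ)) * P (a', e) :=
                      mul_le_mul_of_nonneg_right hle (hP0 _)
              · rw [if_neg h, if_neg (fun hh : ∀ t : {t // t ∈ S}, a' t.1 = a t.1 =>
                  h fun t ht => hh ⟨t, ht⟩)]
                simp
      calc (∑ a' : ∀ t, A t, P (a', e) * ∏ t, ∑ y : X t,
            μ t y * (if f t y (a' t) = f t y (a t) then 1 else 0))
          ≤ ∑ a' : ∀ t, A t, ∑ S ∈ univ.powerset,
              (∏ t ∈ univ \ S, ε / (N t : ℝ)) *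
              (if (∀ t : {t // t ∈ S}, a' t.1 = a t.1) then P (a', e) else 0) :=
            Finset.sum_le_sum fun a' _ => hkey a'
        _ = ∑ S ∈ univ.powerset, ∑ a' : ∀ t, A t,
              (∏ t ∈ univ \ S, ε / (N t : ℝ)) *
              (if (∀ t : {t // t ∈ S}, a' t.1 = a t.1) then P (a', e) else 0) :=
            Finset.sum_comm
        _ = ∑ S ∈ univ.powerset, (∏ t ∈ univ \ S, ε / (N t : ℝ)) *
              QSfun P S (fun t => a t.1) e := by
            refine Finset.sum_congr rfl fun S _ => ?_
            rw [← Finset.mul_sum]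
            rfl
    -- C5 : rpow subadditivity
    have hGs : ∀ (a : ∀ t, A t) e, Gfun μ f P a e ^ s
        ≤ ∑ S ∈ univ.powerset, ((∏ t ∈ univ \ S, ε / (N t : ℝ)) ^ s) *
            QSfun P S (fun t => a t.1) e ^ s := by
      intro a e
      have hεN : ∀ t : Fin T, (0:ℝ) ≤ ε / (N t : ℝ) :=
        fun t => div_nonneg hε.le (Nat.cast_nonneg _)
      calc Gfun μ f P a e ^ s
          ≤ (∑ S ∈ univ.powerset, (∏ t ∈ univ \ S, ε / (N t : ℝ)) *
              QSfun P S (fun t => a t.1) e) ^ s :=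
            Real.rpow_le_rpow (hG0 a e) (hGle a e) hs0
        _ ≤ ∑ S ∈ univ.powerset, ((∏ t ∈ univ \ S, ε / (N t : ℝ)) *
              QSfun P S (fun t => a t.1) e) ^ s :=
            rpow_sum_le_sum_rpow' _ _ (fun S _ => mul_nonneg
              (Finset.prod_nonneg fun t _ => hεN t) (hQS0 S _ e)) hs hs1
        _ = ∑ S ∈ univ.powerset, ((∏ t ∈ univ \ S, ε / (N t : ℝ)) ^ s) *
              QSfun P S (fun t => a t.1) e ^ s :=
            Finset.sum_congr rfl fun S _ => Real.mul_rpow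
              (Finset.prod_nonneg fun t _ => hεN t) (hQS0 S _ e)
    -- C7 : regrouping over the marginal
    have hregroup : ∀ (S : Finset (Fin T)) e,
        (∑ a : ∀ t, A t, P (a, e) * QSfun P S (fun t => a t.1) e ^ s)
          = ∑ α : ∀ t : {t // t ∈ S}, A t.1, QSfun P S α e ^ (1 + s) := by
      intro S e
      symm
      calc (∑ α : ∀ t : {t // t ∈ S}, A t.1, QSfun P S α e ^ (1 + s))
          = ∑ α : ∀ t : {t // t ∈ S}, A t.1, QSfun P S α e * QSfun P S α e ^ s :=
            Finset.sum_congr rfl fun α _ => by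
              rw [Real.rpow_add' (hQS0 S α e) (by positivity), Real.rpow_one]
        _ = ∑ α : ∀ t : {t // t ∈ S}, A t.1, ∑ a : ∀ t, A t,
              (if (∀ t : {t // t ∈ S}, a t.1 = α t)
                then P (a, e) * QSfun P S α e ^ s else 0) :=
            Finset.sum_congr rfl fun α _ =>
              sum_ite_mul' univ _ (fun a => P (a, e)) (QSfun P S α e ^ s)
        _ = ∑ a : ∀ t, A t, ∑ α : ∀ t : {t // t ∈ S}, A t.1,
              (if (∀ t : {t // t ∈ S}, a t.1 = α t)
                then P (a, e) * QSfun P S α e ^ s else 0) := Finset.sum_comm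
        _ = ∑ a : ∀ t, A t, P (a, e) * QSfun P S (fun t => a t.1) e ^ s :=
            Finset.sum_congr rfl fun a _ =>
              sum_ite_forall_eq (fun t : {t // t ∈ S} => a t.1)
                (fun α => P (a, e) * QSfun P S α e ^ s) _
    -- C6 : pull the subset-sum out
    have hC6 : (∑ e, (Qfun P e) ^ (-s) * ∑ a : ∀ t, A t, P (a, e) *
          ∑ S ∈ univ.powerset, ((∏ t ∈ univ \ S, ε / (N t : ℝ)) ^ s) *
            QSfun P S (fun t => a t.1) e ^ s)
        = ∑ S ∈ univ.powerset, ((∏ t ∈ univ \ S, ε / (N t : ℝ)) ^ s) * WSfun P s S := by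
      calc (∑ e, (Qfun P e) ^ (-s) * ∑ a : ∀ t, A t, P (a, e) *
            ∑ S ∈ univ.powerset, ((∏ t ∈ univ \ S, ε / (N t : ℝ)) ^ s) *
              QSfun P S (fun t => a t.1) e ^ s)
          = ∑ e, ∑ a : ∀ t, A t, ∑ S ∈ univ.powerset, (Qfun P e) ^ (-s) *
              (P (a, e) * (((∏ t ∈ univ \ S, ε / (N t : ℝ)) ^ s) *
                QSfun P S (fun t => a t.1) e ^ s)) := by
            refine Finset.sum_congr rfl fun e _ => ?_
            simp only [Finset.mul_sum]
        _ = ∑ e, ∑ S ∈ univ.powerset, ∑ a : ∀ t, A t, (Qfun P e) ^ (-s) *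
              (P (a, e) * (((∏ t ∈ univ \ S, ε / (N t : ℝ)) ^ s) *
                QSfun P S (fun t => a t.1) e ^ s)) :=
            Finset.sum_congr rfl fun e _ => Finset.sum_comm
        _ = ∑ S ∈ univ.powerset, ∑ e, ∑ a : ∀ t, A t, (Qfun P e) ^ (-s) *
              (P (a, e) * (((∏ t ∈ univ \ S, ε / (N t : ℝ)) ^ s) *
                QSfun P S (fun t => a t.1) e ^ s)) := Finset.sum_comm
        _ = ∑ S ∈ univ.powerset, ((∏ t ∈ univ \ S, ε / (N t : ℝ)) ^ s) * WSfun P s S := by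
            refine Finset.sum_congr rfl fun S _ => ?_
            calc (∑ e, ∑ a : ∀ t, A t, (Qfun P e) ^ (-s) *
                  (P (a, e) * (((∏ t ∈ univ \ S, ε / (N t : ℝ)) ^ s) *
                    QSfun P S (fun t => a t.1) e ^ s)))
                = ∑ e, ((∏ t ∈ univ \ S, ε / (N t : ℝ)) ^ s) *
                    ((Qfun P e) ^ (-s) *
                      ∑ α : ∀ t : {t // t ∈ S}, A t.1, QSfun P S α e ^ (1 + s)) := by
                  refine Finset.sum_congr rfl fun e _ => ?_
                  rw [← hregroup S e]
                  simp only [Finset.mul_sum]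
                  exact Finset.sum_congr rfl fun a _ => by ring
              _ = ((∏ t ∈ univ \ S, ε / (N t : ℝ)) ^ s) * WSfun P s S :=
                  (Finset.mul_sum _ _ _).symm
    -- C8 : the empty-set term
    have hIsEmpty : IsEmpty {t : Fin T // t ∈ (∅ : Finset (Fin T))} :=
      ⟨fun t => Finset.notMem_empty t.1 t.2⟩
    have hQSe : ∀ (α : ∀ t : {t // t ∈ (∅ : Finset (Fin T))}, A t.1) e,
        QSfun P ∅ α e = Qfun P e := by
      intro α e
      refine Finset.sum_congr rfl fun a _ => ?_
      rw [if_pos (fun t => (hIsEmpty.false t).elim)]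
    have hWSempty : WSfun P s ∅ = 1 := by
      calc WSfun P s ∅
          = ∑ e, (Qfun P e) ^ (-s) *
              ∑ _α : ∀ t : {t // t ∈ (∅ : Finset (Fin T))}, A t.1, (Qfun P e) ^ (1 + s) := by
            refine Finset.sum_congr rfl fun e _ => ?_
            exact congrArg _ (Finset.sum_congr rfl fun α _ => by rw [hQSe α e])
        _ = ∑ e, Qfun P e := by
            refine Finset.sum_congr rfl fun e _ => ?_
            haveI := hIsEmpty
            rw [Finset.sum_const, Finset.card_univ, Fintype.card_unique, one_smul]
            rcases (hQ0 e).eq_or_lt with hq | hq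
            · rw [← hq, Real.zero_rpow (neg_ne_zero.2 hsne), zero_mul]
            · rw [← Real.rpow_add hq]
              norm_num
        _ = 1 := hQ1
    -- C9 : identify WSfun with the exponential of the Rényi entropy
    have hWSexp : ∀ S : Finset (Fin T),
        Real.exp (-s * condRenyi s (fun ae : (∀ t : {t // t ∈ S}, A t.1) × E =>
          ∑ a : ∀ t, A t,
            if (∀ t : {t // t ∈ S}, a t.1 = ae.1 t) then P (a, ae.2) else 0))
        = WSfun P s S := by
      intro S
      have hpos : 0 < ∑ e, (∑ α' : ∀ t : {t // t ∈ S}, A t.1, QSfun P S α' e) *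
          ∑ α : ∀ t : {t // t ∈ S}, A t.1,
            (QSfun P S α e / ∑ α' : ∀ t : {t // t ∈ S}, A t.1, QSfun P S α' e) ^ (1 + s) := by
        refine renyi_raw_pos (fun ae => QSfun P S ae.1 ae.2)
          (fun ae => hQS0 S ae.1 ae.2) ?_ hs
        have h1 : (∑ e, ∑ α : ∀ t : {t // t ∈ S}, A t.1, QSfun P S α e) = 1 := by
          simp only [hQSsum]; exact hQ1
        exact lt_of_lt_of_eq one_pos h1.symm
      rw [condRenyi_exp (fun ae : (∀ t : {t // t ∈ S}, A t.1) × E =>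
        ∑ a : ∀ t, A t,
          if (∀ t : {t // t ∈ S}, a t.1 = ae.1 t) then P (a, ae.2) else 0) hsne hpos]
      show (∑ e, (∑ α' : ∀ t : {t // t ∈ S}, A t.1, QSfun P S α' e) *
          ∑ α : ∀ t : {t // t ∈ S}, A t.1,
            (QSfun P S α e / ∑ α' : ∀ t : {t // t ∈ S}, A t.1, QSfun P S α' e) ^ (1 + s))
          = WSfun P s S
      refine Finset.sum_congr rfl fun e _ => ?_
      calc (∑ α' : ∀ t : {t // t ∈ S}, A t.1, QSfun P S α' e) *
            ∑ α : ∀ t : {t // t ∈ S}, A t.1,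
              (QSfun P S α e / ∑ α' : ∀ t : {t // t ∈ S}, A t.1, QSfun P S α' e) ^ (1 + s)
          = (∑ α' : ∀ t : {t // t ∈ S}, A t.1, QSfun P S α' e) ^ (-s) *
              ∑ α : ∀ t : {t // t ∈ S}, A t.1, QSfun P S α e ^ (1 + s) :=
            renyi_term_eq (fun α => QSfun P S α e) (fun α => hQS0 S α e) hs
        _ = (Qfun P e) ^ (-s) *
              ∑ α : ∀ t : {t // t ∈ S}, A t.1, QSfun P S α e ^ (1 + s) := by
            rw [hQSsum S e]
    -- coefficient algebra
    have hεN : ∀ t : Fin T, (0:ℝ) ≤ ε / (N t : ℝ) :=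
      fun t => div_nonneg hε.le (Nat.cast_nonneg _)
    have hcoeff : ∀ S : Finset (Fin T),
        (∏ t, (N t : ℝ) ^ s) * ((∏ t ∈ univ \ S, ε / (N t : ℝ)) ^ s)
          = ε ^ (s * ((T : ℝ) - (S.card : ℝ))) * ∏ t ∈ S, (N t : ℝ) ^ s := by
      intro S
      have h1 : ((∏ t ∈ univ \ S, ε / (N t : ℝ)) ^ s)
          = ∏ t ∈ univ \ S, (ε / (N t : ℝ)) ^ s :=
        (Real.finset_prod_rpow _ _ (fun t _ => hεN t) s).symm
      have h2 : (∏ t, (N t : ℝ) ^ s)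
          = (∏ t ∈ univ \ S, (N t : ℝ) ^ s) * ∏ t ∈ S, (N t : ℝ) ^ s :=
        (Finset.prod_sdiff (Finset.subset_univ S)).symm
      have h3 : (∏ t ∈ univ \ S, (N t : ℝ) ^ s) * (∏ t ∈ univ \ S, (ε / (N t : ℝ)) ^ s)
          = ∏ t ∈ univ \ S, ε ^ s := by
        rw [← Finset.prod_mul_distrib]
        refine Finset.prod_congr rfl fun t _ => ?_
        rw [← Real.mul_rpow (Nat.cast_nonneg _) (hεN t)]
        congr 1
        have : ((N t : ℝ)) ≠ 0 := by
          exact_mod_cast (hN t).ne'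
        field_simp
      have hcardle : S.card ≤ T := by
        simpa using Finset.card_le_univ S
      have h4 : (∏ t ∈ univ \ S, ε ^ s) = ε ^ (s * ((T : ℝ) - (S.card : ℝ))) := by
        rw [Finset.prod_const]
        have hcard : (univ \ S).card = T - S.card := by
          rw [Finset.card_sdiff_of_subset (Finset.subset_univ S), Finset.card_univ, Fintype.card_fin]
        rw [hcard, ← Real.rpow_natCast (ε ^ s) (T - S.card), ← Real.rpow_mul hε.le,
          Nat.cast_sub hcardle]
      calc (∏ t, (N t : ℝ) ^ s) * ((∏ t ∈ univ \ S, ε / (N t : ℝ)) ^ s)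
          = ((∏ t ∈ univ \ S, (N t : ℝ) ^ s) * (∏ t ∈ univ \ S, (ε / (N t : ℝ)) ^ s)) *
              ∏ t ∈ S, (N t : ℝ) ^ s := by rw [h1, h2]; ring
        _ = (∏ t ∈ univ \ S, ε ^ s) * ∏ t ∈ S, (N t : ℝ) ^ s := by rw [h3]
        _ = ε ^ (s * ((T : ℝ) - (S.card : ℝ))) * ∏ t ∈ S, (N t : ℝ) ^ s := by rw [h4]
    -- the complete chain
    have hchain : ∑ x : ∀ t, X t, Wfun μ x * Zfun f P s x
        ≤ ∑ S ∈ univ.powerset, ((∏ t ∈ univ \ S, ε / (N t : ℝ)) ^ s) * WSfun P s S := by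
      calc ∑ x : ∀ t, X t, Wfun μ x * Zfun f P s x
          = ∑ e, (Qfun P e) ^ (-s) * ∑ a : ∀ t, A t,
              P (a, e) * ∑ x : ∀ t, X t,
                Wfun μ x * pfun f P x (fun t => f t (x t) (a t)) e ^ s := hC1
        _ ≤ ∑ e, (Qfun P e) ^ (-s) * ∑ a : ∀ t, A t,
              P (a, e) * Gfun μ f P a e ^ s := hC2
        _ ≤ ∑ e, (Qfun P e) ^ (-s) * ∑ a : ∀ t, A t, P (a, e) *
              ∑ S ∈ univ.powerset, ((∏ t ∈ univ \ S, ε / (N t : ℝ)) ^ s) *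
                QSfun P S (fun t => a t.1) e ^ s := by
            refine Finset.sum_le_sum fun e _ =>
              mul_le_mul_of_nonneg_left ?_ (Real.rpow_nonneg (hQ0 e) _)
            exact Finset.sum_le_sum fun a _ =>
              mul_le_mul_of_nonneg_left (hGs a e) (hP0 _)
        _ = ∑ S ∈ univ.powerset, ((∏ t ∈ univ \ S, ε / (N t : ℝ)) ^ s) * WSfun P s S := hC6
    -- final assembly
    have hNnn : (0:ℝ) ≤ ∏ t, (N t : ℝ) ^ s :=
      Finset.prod_nonneg fun t _ => Real.rpow_nonneg (Nat.cast_nonneg _) _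
    calc ∑ x : ∀ t, X t, (∏ t, μ t (x t)) *
        Real.exp (s * ((∑ t, Real.log (N t)) -
          condRenyi s (fun me : (∀ t, Fin (N t)) × E =>
            ∑ a : ∀ t, A t,
              if (∀ t, f t (x t) (a t) = me.1 t) then P (a, me.2) else 0)))
        = (∏ t, (N t : ℝ) ^ s) * ∑ x : ∀ t, X t, Wfun μ x * Zfun f P s x := by
          rw [Finset.mul_sum]
          refine Finset.sum_congr rfl fun x _ => ?_
          rw [hxid x]
          show (∏ t, μ t (x t)) * ((∏ t, (N t : ℝ) ^ s) * Zfun f P s x)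
            = (∏ t, (N t : ℝ) ^ s) * ((∏ t, μ t (x t)) * Zfun f P s x)
          ring
      _ ≤ (∏ t, (N t : ℝ) ^ s) *
            ∑ S ∈ univ.powerset, ((∏ t ∈ univ \ S, ε / (N t : ℝ)) ^ s) * WSfun P s S :=
          mul_le_mul_of_nonneg_left hchain hNnn
      _ = ∑ S ∈ univ.powerset, (∏ t, (N t : ℝ) ^ s) *
            (((∏ t ∈ univ \ S, ε / (N t : ℝ)) ^ s) * WSfun P s S) := Finset.mul_sum _ _ _
      _ = (∑ S ∈ univ.powerset.filter (fun S : Finset (Fin T) => S.Nonempty),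
            (∏ t, (N t : ℝ) ^ s) *
              (((∏ t ∈ univ \ S, ε / (N t : ℝ)) ^ s) * WSfun P s S)) +
          ∑ S ∈ univ.powerset.filter (fun S : Finset (Fin T) => ¬ S.Nonempty),
            (∏ t, (N t : ℝ) ^ s) *
              (((∏ t ∈ univ \ S, ε / (N t : ℝ)) ^ s) * WSfun P s S) :=
          (Finset.sum_filter_add_sum_filter_not _ _ _).symm
      _ = ε ^ (s * (T : ℝ)) +
          ∑ S ∈ univ.powerset.filter (fun S : Finset (Fin T) => S.Nonempty),
            ε ^ (s * ((T : ℝ) - (S.card : ℝ))) * (∏ t ∈ S, (N t : ℝ) ^ s) *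
              Real.exp (-s * condRenyi s (fun ae : (∀ t : {t // t ∈ S}, A t.1) × E =>
                ∑ a : ∀ t, A t,
                  if (∀ t : {t // t ∈ S}, a t.1 = ae.1 t) then P (a, ae.2) else 0)) := by
          rw [add_comm]
          congr 1
          · -- empty part
            have hempty : univ.powerset.filter (fun S : Finset (Fin T) => ¬ S.Nonempty)
                = {(∅ : Finset (Fin T))} := by
              ext S
              simp [Finset.not_nonempty_iff_eq_empty]
            rw [hempty, Finset.sum_singleton, hWSempty, mul_one, hcoeff ∅]
            simp
          · -- nonempty part
            refine Finset.sum_congr rfl fun S hS => ?_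
            rw [← hWSexp S, ← mul_assoc, hcoeff S]
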